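/- arXiv:2102.07852 — 4 statements merged into one kernel-verified Lean document; each statement's English description precedes it below -/
import Mathlib

section
/- For 1 < p ≤ 2 and ε ∈ [0,2], the modulus of convexity of L_p satisfies δ_p(ε) ≥ ((p-1)/8)·ε², i.e., for all f, g in L_p with ‖f‖_p ≤ 1, ‖g‖_p ≤ 1 and ‖f - g‖_p ≥ ε, one has ‖f + g‖_p ≤ 2 - ((p-1)/4)·ε². -/
open MeasureTheory Set

/-- The real-valued `L_p` norm `‖f‖_p = (∫ |f|^p dμ)^{1/p}` (via `eLpNorm`). -/
noncomputable def LpNorm {Z : Type*} [MeasurableSpace Z] (μ : Measure Z)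
    (f : Z → ℝ) (p : ℝ) : ℝ :=
  (eLpNorm f (ENNReal.ofReal p) μ).toReal

/-!
Convexity of `x ↦ (1 + x)^p + (1 - x)^p - p(p-1)x²` on `[-1, 1]` (its second derivative is
`p(p-1)((1+x)^(p-2) + (1-x)^(p-2) - 2) ≥ 0`) gives, after scaling, the pointwise inequality
`((a+b)² + (p-1)(a-b)²)^(p/2) ≤ 2^(p-1) (|a|^p + |b|^p)`. Integrate it with `a = f z`, `b = g z`.
Since `p/2 ≤ 1`, the reverse Minkowski inequality in `L^(p/2)` bounds the integral of the left side
from below by `(‖f+g‖² + (p-1)‖f-g‖²)^(p/2)`. In the unit ball this yields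
`‖f+g‖² + (p-1)‖f-g‖² ≤ 4`, and `‖f+g‖ ≤ (‖f+g‖² + 4)/4` concludes.
-/

open Real

theorem two_le_one_add_rpow_add_one_sub_rpow {s x : ℝ} (hs : s ≤ 0) (hx : |x| < 1) :
    2 ≤ (1 + x) ^ s + (1 - x) ^ s := by
  obtain ⟨hx₁, hx₂⟩ := abs_lt.1 hx
  have hpos₁ : 0 < 1 + x := by linarith
  have hpos₂ : 0 < 1 - x := by linarith
  have hprod : 1 ≤ (1 + x) ^ s * (1 - x) ^ s := by
    rw [← mul_rpow hpos₁.le hpos₂.le]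
    exact one_le_rpow_of_pos_of_le_one_of_nonpos (mul_pos hpos₁ hpos₂)
      (by nlinarith [sq_nonneg x]) hs
  nlinarith [sq_nonneg ((1 + x) ^ s - (1 - x) ^ s), rpow_pos_of_pos hpos₁ s,
    rpow_pos_of_pos hpos₂ s]

theorem convexOn_one_add_rpow_add_one_sub_rpow_sub_sq {p : ℝ} (hp₁ : 1 ≤ p) (hp₂ : p ≤ 2) :
    ConvexOn ℝ (Icc (-1) 1) fun x : ℝ ↦ (1 + x) ^ p + (1 - x) ^ p - p * (p - 1) * x ^ 2 := by
  refine convexOn_of_hasDerivWithinAt2_nonneg (convex_Icc _ _)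
    (f' := fun x ↦ p * (1 + x) ^ (p - 1) - p * (1 - x) ^ (p - 1) - 2 * p * (p - 1) * x)
    (f'' := fun x ↦ p * (p - 1) * ((1 + x) ^ (p - 2) + (1 - x) ^ (p - 2) - 2)) ?_ ?_ ?_ ?_
  · refine ContinuousOn.sub (ContinuousOn.add ?_ ?_) (by fun_prop)
    · exact (continuousOn_const.add continuousOn_id).rpow_const fun _ _ ↦ Or.inr (by linarith)
    · exact (continuousOn_const.sub continuousOn_id).rpow_const fun _ _ ↦ Or.inr (by linarith)
  all_goals simp only [interior_Icc]
  · intro x _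
    have h₁ := ((hasDerivAt_id' x).const_add 1).rpow_const (p := p) (Or.inr hp₁)
    have h₂ := ((hasDerivAt_id' x).const_sub 1).rpow_const (p := p) (Or.inr hp₁)
    have h₃ := (hasDerivAt_pow 2 x).const_mul (p * (p - 1))
    exact (((h₁.add h₂).sub h₃).congr_deriv (by push_cast; ring)).hasDerivWithinAt
  · intro x hx
    have h₁ := ((hasDerivAt_id' x).const_add 1).rpow_const (p := p - 1)
      (Or.inl (by linarith [hx.1]))
    have h₂ := ((hasDerivAt_id' x).const_sub 1).rpow_const (p := p - 1)
      (Or.inl (by linarith [hx.2]))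
    have h₃ := (hasDerivAt_id' x).const_mul (2 * p * (p - 1))
    exact ((((h₁.const_mul p).sub (h₂.const_mul p)).sub h₃).congr_deriv
      (by rw [show p - 1 - 1 = p - 2 by ring]; ring)).hasDerivWithinAt
  · intro x hx
    have htwo := two_le_one_add_rpow_add_one_sub_rpow (s := p - 2) (by linarith) (abs_lt.2 hx)
    have hcoeff : 0 ≤ p * (p - 1) := by nlinarith
    exact mul_nonneg hcoeff (by linarith)

theorem two_add_mul_sq_le_one_add_rpow_add_one_sub_rpow {p x : ℝ} (hp₁ : 1 ≤ p) (hp₂ : p ≤ 2)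
    (hx : |x| ≤ 1) : 2 + p * (p - 1) * x ^ 2 ≤ (1 + x) ^ p + (1 - x) ^ p := by
  obtain ⟨hx₁, hx₂⟩ := abs_le.1 hx
  have := (convexOn_one_add_rpow_add_one_sub_rpow_sub_sq hp₁ hp₂).2
    (⟨by linarith, by linarith⟩ : -x ∈ Icc (-1 : ℝ) 1) ⟨hx₁, hx₂⟩
    (by norm_num : (0 : ℝ) ≤ 1 / 2) (by norm_num : (0 : ℝ) ≤ 1 / 2) (by norm_num)
  norm_num [← sub_eq_add_neg] at this
  linarith

theorem sq_rpow_div_two (p c : ℝ) : (c ^ 2) ^ (p / 2) = |c| ^ p := by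
  rw [← sq_abs, ← rpow_natCast, ← rpow_mul (abs_nonneg c)]
  congr 1
  ring

theorem sq_add_mul_sq_rpow_le {p : ℝ} (hp₁ : 1 ≤ p) (hp₂ : p ≤ 2) (u v : ℝ) :
    (u ^ 2 + (p - 1) * v ^ 2) ^ (p / 2) ≤ (|u + v| ^ p + |u - v| ^ p) / 2 := by
  wlog h : |v| ≤ |u| generalizing u v
  · have huv : u ^ 2 ≤ v ^ 2 := sq_le_sq.2 (not_le.1 h).le
    calc (u ^ 2 + (p - 1) * v ^ 2) ^ (p / 2) ≤ (v ^ 2 + (p - 1) * u ^ 2) ^ (p / 2) :=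
          rpow_le_rpow (by nlinarith) (by nlinarith) (by linarith)
      _ ≤ (|v + u| ^ p + |v - u| ^ p) / 2 := this v u (not_le.1 h).le
      _ = (|u + v| ^ p + |u - v| ^ p) / 2 := by rw [add_comm v u, abs_sub_comm v u]
  rcases eq_or_ne u 0 with rfl | hu
  · obtain rfl : v = 0 := abs_nonpos_iff.1 (by simpa using h)
    simp [zero_rpow (by positivity : p / 2 ≠ 0), zero_rpow (by positivity : p ≠ 0)]
  set r := v / u
  have hv : v = u * r := (mul_div_cancel₀ v hu).symm
  have hr : |r| ≤ 1 := by rwa [abs_div, div_le_one (abs_pos.2 hu)]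
  obtain ⟨hr₁, hr₂⟩ := abs_le.1 hr
  calc (u ^ 2 + (p - 1) * v ^ 2) ^ (p / 2) = |u| ^ p * (1 + (p - 1) * r ^ 2) ^ (p / 2) := by
        rw [hv, ← sq_rpow_div_two, ← mul_rpow (sq_nonneg u) (by nlinarith)]
        ring_nf
    _ ≤ |u| ^ p * (1 + p / 2 * ((p - 1) * r ^ 2)) := by
        gcongr
        exact rpow_one_add_le_one_add_mul_self (by nlinarith) (by positivity) (by linarith)
    _ ≤ |u| ^ p * (((1 + r) ^ p + (1 - r) ^ p) / 2) := by
        have := two_add_mul_sq_le_one_add_rpow_add_one_sub_rpow hp₁ hp₂ hr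
        gcongr
        linarith
    _ = (|u + v| ^ p + |u - v| ^ p) / 2 := by
        rw [hv, show u + u * r = u * (1 + r) by ring, show u - u * r = u * (1 - r) by ring,
          abs_mul, abs_mul, abs_of_nonneg (by linarith : 0 ≤ 1 + r),
          abs_of_nonneg (by linarith : 0 ≤ 1 - r), mul_rpow (abs_nonneg u) (by linarith),
          mul_rpow (abs_nonneg u) (by linarith)]
        ring

theorem add_sq_add_mul_sub_sq_rpow_le {p : ℝ} (hp₁ : 1 ≤ p) (hp₂ : p ≤ 2) (a b : ℝ) :
    ((a + b) ^ 2 + (p - 1) * (a - b) ^ 2) ^ (p / 2) ≤ 2 ^ (p - 1) * (|a| ^ p + |b| ^ p) := by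
  have := sq_add_mul_sq_rpow_le hp₁ hp₂ (a + b) (a - b)
  rwa [show a + b + (a - b) = 2 * a by ring, show a + b - (a - b) = 2 * b by ring, abs_mul,
    abs_mul, abs_two, mul_rpow zero_le_two (abs_nonneg a), mul_rpow zero_le_two (abs_nonneg b),
    ← mul_add, mul_div_right_comm, ← rpow_sub_one two_ne_zero] at this

theorem rpow_mul_rpow_add_rpow_mul_rpow_le {q a b x y : ℝ} (hq₀ : 0 < q) (hq₁ : q ≤ 1)
    (ha : 0 ≤ a) (hb : 0 ≤ b) (hx : 0 ≤ x) (hy : 0 ≤ y) :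
    a ^ (1 - q) * x ^ q + b ^ (1 - q) * y ^ q ≤ (a + b) ^ (1 - q) * (x + y) ^ q := by
  rcases (add_nonneg hx hy).eq_or_lt with hxy | hxy
  · obtain ⟨rfl, rfl⟩ : x = 0 ∧ y = 0 := ⟨by linarith, by linarith⟩
    simp [zero_rpow hq₀.ne']
  rcases (add_nonneg ha hb).eq_or_lt with hab | hab
  · obtain ⟨rfl, rfl⟩ : a = 0 ∧ b = 0 := ⟨by linarith, by linarith⟩
    rcases hq₁.eq_or_lt with rfl | hq₁
    · simp
    · simp [zero_rpow (sub_pos.2 hq₁).ne']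
  have amgm {c z : ℝ} (hc : 0 ≤ c) (hz : 0 ≤ z) :
      (c / (a + b)) ^ (1 - q) * (z / (x + y)) ^ q
        ≤ (1 - q) * (c / (a + b)) + q * (z / (x + y)) :=
    geom_mean_le_arith_mean2_weighted (by linarith) hq₀.le (by positivity) (by positivity)
      (by ring)
  have key : (a / (a + b)) ^ (1 - q) * (x / (x + y)) ^ q
      + (b / (a + b)) ^ (1 - q) * (y / (x + y)) ^ q ≤ 1 := by
    calc _ ≤ (1 - q) * (a / (a + b)) + q * (x / (x + y))
          + ((1 - q) * (b / (a + b)) + q * (y / (x + y))) := add_le_add (amgm ha hx) (amgm hb hy)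
      _ = 1 := by field_simp; ring
  rwa [div_rpow ha hab.le, div_rpow hx hxy.le, div_rpow hb hab.le, div_rpow hy hxy.le,
    div_mul_div_comm, div_mul_div_comm, ← add_div, div_le_one (by positivity)] at key

theorem rpow_add_le_integral_rpow_add {Z : Type*} [MeasurableSpace Z] {μ : Measure Z}
    {q : ℝ} (hq₀ : 0 < q) (hq₁ : q ≤ 1) {X Y : Z → ℝ} (hX : ∀ z, 0 ≤ X z) (hY : ∀ z, 0 ≤ Y z)
    (hXi : Integrable (fun z ↦ X z ^ q) μ) (hYi : Integrable (fun z ↦ Y z ^ q) μ)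
    (hXYi : Integrable (fun z ↦ (X z + Y z) ^ q) μ) {a b : ℝ} (ha : 0 ≤ a) (hb : 0 ≤ b)
    (haX : a ^ q ≤ ∫ z, X z ^ q ∂μ) (hbY : b ^ q ≤ ∫ z, Y z ^ q ∂μ) :
    (a + b) ^ q ≤ ∫ z, (X z + Y z) ^ q ∂μ := by
  rcases (add_nonneg ha hb).eq_or_lt with hab | hab
  · rw [← hab, zero_rpow hq₀.ne']
    exact integral_nonneg fun z ↦ rpow_nonneg (add_nonneg (hX z) (hY z)) q
  have hself {c : ℝ} (hc : 0 ≤ c) : c ^ (1 - q) * c ^ q = c := by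
    rw [← rpow_add' hc (by norm_num), sub_add_cancel, rpow_one]
  have hint : a ^ (1 - q) * ∫ z, X z ^ q ∂μ + b ^ (1 - q) * ∫ z, Y z ^ q ∂μ
      ≤ (a + b) ^ (1 - q) * ∫ z, (X z + Y z) ^ q ∂μ := by
    rw [← integral_const_mul, ← integral_const_mul, ← integral_const_mul,
      ← integral_add (hXi.const_mul _) (hYi.const_mul _)]
    exact integral_mono ((hXi.const_mul _).add (hYi.const_mul _)) (hXYi.const_mul _)
      fun z ↦ rpow_mul_rpow_add_rpow_mul_rpow_le hq₀ hq₁ ha hb (hX z) (hY z)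
  refine le_of_mul_le_mul_left ?_ (rpow_pos_of_pos hab (1 - q))
  calc (a + b) ^ (1 - q) * (a + b) ^ q = a ^ (1 - q) * a ^ q + b ^ (1 - q) * b ^ q := by
        rw [hself ha, hself hb, hself hab.le]
    _ ≤ a ^ (1 - q) * ∫ z, X z ^ q ∂μ + b ^ (1 - q) * ∫ z, Y z ^ q ∂μ := by gcongr
    _ ≤ _ := hint

section LpNorm

variable {Z : Type*} [MeasurableSpace Z] {μ : Measure Z} {p : ℝ} {f g : Z → ℝ}

theorem LpNorm_nonneg (μ : Measure Z) (f : Z → ℝ) (p : ℝ) : 0 ≤ LpNorm μ f p :=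
  ENNReal.toReal_nonneg

theorem MeasureTheory.MemLp.integrable_abs_rpow (hp : 0 < p)
    (hf : MemLp f (ENNReal.ofReal p) μ) :
    Integrable (fun z ↦ |f z| ^ p) μ := by
  simpa [ENNReal.toReal_ofReal hp.le] using
    hf.integrable_norm_rpow (by simpa using hp) ENNReal.ofReal_ne_top

theorem MeasureTheory.MemLp.LpNorm_rpow_eq_integral (hp : 0 < p)
    (hf : MemLp f (ENNReal.ofReal p) μ) :
    LpNorm μ f p ^ p = ∫ z, |f z| ^ p ∂μ := by
  have hI : 0 ≤ ∫ z, |f z| ^ p ∂μ := integral_nonneg fun z ↦ rpow_nonneg (abs_nonneg _) p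
  rw [LpNorm, hf.eLpNorm_eq_integral_rpow_norm (by simpa using hp) ENNReal.ofReal_ne_top,
    ENNReal.toReal_ofReal hp.le]
  simp only [Real.norm_eq_abs]
  rw [ENNReal.toReal_ofReal (rpow_nonneg hI _), ← rpow_mul hI, inv_mul_cancel₀ hp.ne', rpow_one]

theorem LpNorm_add_sq_add_mul_LpNorm_sub_sq_rpow_le (hp₁ : 1 ≤ p) (hp₂ : p ≤ 2)
    (hf : MemLp f (ENNReal.ofReal p) μ) (hg : MemLp g (ENNReal.ofReal p) μ) :
    (LpNorm μ (f + g) p ^ 2 + (p - 1) * LpNorm μ (f - g) p ^ 2) ^ (p / 2)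
      ≤ 2 ^ (p - 1) * (LpNorm μ f p ^ p + LpNorm μ g p ^ p) := by
  have hp : 0 < p := by linarith
  have hp₁' : 0 ≤ p - 1 := by linarith
  have hsum := (hf.add hg).integrable_abs_rpow hp
  have hdiff := (hf.sub hg).integrable_abs_rpow hp
  have hbound := ((hf.integrable_abs_rpow hp).add (hg.integrable_abs_rpow hp)).const_mul
    (2 ^ (p - 1))
  have hY (z : Z) :
      ((p - 1) * (f z - g z) ^ 2) ^ (p / 2) = (p - 1) ^ (p / 2) * |f z - g z| ^ p := by
    rw [mul_rpow hp₁' (sq_nonneg _), sq_rpow_div_two]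
  have hXYi :
      Integrable (fun z ↦ ((f z + g z) ^ 2 + (p - 1) * (f z - g z) ^ 2) ^ (p / 2)) μ := by
    refine hbound.mono' ?_ (ae_of_all _ fun z ↦ ?_)
    · have := hf.1.aemeasurable
      have := hg.1.aemeasurable
      exact AEMeasurable.aestronglyMeasurable (by fun_prop)
    · rw [norm_of_nonneg (rpow_nonneg (by positivity) _)]
      exact add_sq_add_mul_sub_sq_rpow_le hp₁ hp₂ (f z) (g z)
  calc (LpNorm μ (f + g) p ^ 2 + (p - 1) * LpNorm μ (f - g) p ^ 2) ^ (p / 2)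
      ≤ ∫ z, ((f z + g z) ^ 2 + (p - 1) * (f z - g z) ^ 2) ^ (p / 2) ∂μ := by
        refine rpow_add_le_integral_rpow_add (by linarith) (by linarith) (fun z ↦ sq_nonneg _)
          (fun z ↦ mul_nonneg hp₁' (sq_nonneg _)) ?_ ?_ hXYi (sq_nonneg _)
          (mul_nonneg hp₁' (sq_nonneg _)) ?_ ?_
        · simpa only [sq_rpow_div_two, Pi.add_apply] using hsum
        · simpa only [hY, Pi.sub_apply] using hdiff.const_mul ((p - 1) ^ (p / 2))
        · rw [sq_rpow_div_two, abs_of_nonneg (LpNorm_nonneg _ _ _),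
            (hf.add hg).LpNorm_rpow_eq_integral hp]
          simp only [sq_rpow_div_two, Pi.add_apply, le_refl]
        · rw [mul_rpow hp₁' (sq_nonneg _), sq_rpow_div_two,
            abs_of_nonneg (LpNorm_nonneg _ _ _), (hf.sub hg).LpNorm_rpow_eq_integral hp]
          simp only [hY, integral_const_mul, Pi.sub_apply, le_refl]
    _ ≤ ∫ z, 2 ^ (p - 1) * (|f z| ^ p + |g z| ^ p) ∂μ :=
        integral_mono hXYi hbound fun z ↦ add_sq_add_mul_sub_sq_rpow_le hp₁ hp₂ (f z) (g z)
    _ = 2 ^ (p - 1) * (LpNorm μ f p ^ p + LpNorm μ g p ^ p) := by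
        rw [integral_const_mul, integral_add (hf.integrable_abs_rpow hp)
          (hg.integrable_abs_rpow hp), hf.LpNorm_rpow_eq_integral hp,
          hg.LpNorm_rpow_eq_integral hp]

end LpNorm

theorem lp_modulus_convexity_small_p_general
    {Z : Type*} [MeasurableSpace Z] (μ : Measure Z)
    (p ε : ℝ) (hp1 : 1 < p) (hp2 : p ≤ 2) (hε0 : 0 ≤ ε)
    (f g : Z → ℝ)
    (hf : MemLp f (ENNReal.ofReal p) μ) (hg : MemLp g (ENNReal.ofReal p) μ)
    (hfb : LpNorm μ f p ≤ 1) (hgb : LpNorm μ g p ≤ 1)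
    (hdist : ε ≤ LpNorm μ (f - g) p) :
    LpNorm μ (f + g) p ≤ 2 - (p - 1) / 4 * ε ^ 2 := by
  have hp : 0 < p := by linarith
  have hball {h : Z → ℝ} (hb : LpNorm μ h p ≤ 1) : LpNorm μ h p ^ p ≤ 1 :=
    rpow_le_one (LpNorm_nonneg _ _ _) hb hp.le
  have hsum : LpNorm μ (f + g) p ^ 2 + (p - 1) * LpNorm μ (f - g) p ^ 2 ≤ 4 := by
    refine (rpow_le_rpow_iff (by nlinarith [LpNorm_nonneg μ (f - g) p]) (by norm_num)
      (by positivity : 0 < p / 2)).1 ?_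
    calc _ ≤ 2 ^ (p - 1) * (LpNorm μ f p ^ p + LpNorm μ g p ^ p) :=
          LpNorm_add_sq_add_mul_LpNorm_sub_sq_rpow_le hp1.le hp2 hf hg
      _ ≤ 2 ^ (p - 1) * 2 := by gcongr; linarith [hball hfb, hball hgb]
      _ = (4 : ℝ) ^ (p / 2) := by
          rw [← rpow_add_one two_ne_zero, sub_add_cancel,
            show (4 : ℝ) = 2 ^ (2 : ℝ) by norm_num, ← rpow_mul zero_le_two]
          ring_nf
  have hε : ε ^ 2 ≤ LpNorm μ (f - g) p ^ 2 := pow_le_pow_left₀ hε0 hdist 2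
  nlinarith [LpNorm_nonneg μ (f + g) p, sq_nonneg (LpNorm μ (f + g) p - 2),
    mul_le_mul_of_nonneg_left hε (by linarith : 0 ≤ p - 1)]

/-- For `1 < p ≤ 2` and `ε ∈ [0,2]`, the modulus of convexity of `L_p` satisfies
`δ_p(ε) ≥ ((p-1)/8) ε²`: for `f, g` in the unit ball of `L_p` with `‖f - g‖_p ≥ ε`,
one has `‖f + g‖_p ≤ 2 - ((p-1)/4) ε²`. -/
theorem lp_modulus_convexity_small_p
    {Z : Type*} [MeasurableSpace Z] (μ : Measure Z)
    (p ε : ℝ) (hp1 : 1 < p) (hp2 : p ≤ 2) (hε0 : 0 ≤ ε) (hε2 : ε ≤ 2)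
    (f g : Z → ℝ)
    (hf : MemLp f (ENNReal.ofReal p) μ) (hg : MemLp g (ENNReal.ofReal p) μ)
    (hfb : LpNorm μ f p ≤ 1) (hgb : LpNorm μ g p ≤ 1)
    (hdist : ε ≤ LpNorm μ (f - g) p) :
    LpNorm μ (f + g) p ≤ 2 - (p - 1) / 4 * ε ^ 2 :=
  lp_modulus_convexity_small_p_general μ p ε hp1 hp2 hε0 f g hf hg hfb hgb hdist
end

section
/- For p ≥ 2 and ε ∈ [0,2], the inequality 1 - (1 - (ε/2)^p)^{1/p} ≥ ε^p/(p·2^p) holds. -/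
open Real

/-- For real `p ≥ 2` and `ε ∈ [0,2]`: `1 - (1 - (ε/2)^p)^{1/p} ≥ ε^p/(p·2^p)`. -/
theorem modulus_lower_bound_large_p (p ε : ℝ) (hp : 2 ≤ p)
    (hε0 : 0 ≤ ε) (hε2 : ε ≤ 2) :
    ε ^ p / (p * 2 ^ p) ≤ 1 - (1 - (ε / 2) ^ p) ^ (1 / p) := by
  have hp0 : 0 < p := by linarith
  have ht : (ε / 2) ^ p ≤ 1 := rpow_le_one (by linarith) (by linarith) hp0.le
  have hlhs : ε ^ p / (p * 2 ^ p) = (ε / 2) ^ p / p := by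
    rw [div_rpow hε0 zero_le_two, div_div, mul_comm]
  have hbernoulli : (1 + -(ε / 2) ^ p) ^ (1 / p) ≤ 1 + 1 / p * -(ε / 2) ^ p :=
    rpow_one_add_le_one_add_mul_self (by linarith) (by positivity)
      (div_le_one_of_le₀ (by linarith) hp0.le)
  rw [← sub_eq_add_neg] at hbernoulli
  rw [hlhs]
  linarith [show 1 / p * -(ε / 2) ^ p = -((ε / 2) ^ p / p) by ring]
end

section
/- (Theorem 3.1) Let 2 < a < b < ∞ and let x, y lie in the unit ball of Gψ[a,b]. Then ‖x + y‖_{Gψ} ≤ 2 - θ(x - y), where θ(u) := inf_{p ∈ (a,b)} ‖u‖_p^p / (p · 2^p · ψ(p)^p). -/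
open MeasureTheory Set

section Aux
open ENNReal NNReal

variable {Z : Type*} [MeasurableSpace Z] (μ : Measure Z)

lemma nn_parallelogram (u v : ℝ) :
    ‖u + v‖₊ ^ (2:ℝ) + ‖u - v‖₊ ^ (2:ℝ)
      = 2 * (‖u‖₊ ^ (2:ℝ) + ‖v‖₊ ^ (2:ℝ)) := by
  apply NNReal.coe_injective
  push_cast [NNReal.coe_rpow, coe_nnnorm, Real.norm_eq_abs]
  simp only [Real.rpow_two, sq_abs]
  ring

lemma nn_lp_le_l2 {p : ℝ} (hp : 2 ≤ p) (a b : ℝ≥0) :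
    a ^ p + b ^ p ≤ (a ^ (2:ℝ) + b ^ (2:ℝ)) ^ (p / 2) := by
  have hp0 : (0:ℝ) < p := lt_of_lt_of_le two_pos hp
  have h := NNReal.rpow_add_rpow_le a b two_pos hp
  have h2 := NNReal.rpow_le_rpow h hp0.le
  rwa [← NNReal.rpow_mul, ← NNReal.rpow_mul, one_div, inv_mul_cancel₀ hp0.ne',
    NNReal.rpow_one, one_div, inv_mul_eq_div] at h2

lemma nn_clarkson {p : ℝ} (hp : 2 ≤ p) (u v : ℝ) :
    ‖u + v‖₊ ^ p + ‖u - v‖₊ ^ p ≤ 2 ^ (p - 1) * (‖u‖₊ ^ p + ‖v‖₊ ^ p) := by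
  have hp0 : (0:ℝ) < p := lt_of_lt_of_le two_pos hp
  have hr1 : (1:ℝ) ≤ p / 2 := by linarith
  calc ‖u + v‖₊ ^ p + ‖u - v‖₊ ^ p
      ≤ (‖u + v‖₊ ^ (2:ℝ) + ‖u - v‖₊ ^ (2:ℝ)) ^ (p / 2) := nn_lp_le_l2 hp _ _
    _ = (2 * (‖u‖₊ ^ (2:ℝ) + ‖v‖₊ ^ (2:ℝ))) ^ (p / 2) := by rw [nn_parallelogram]
    _ = 2 ^ (p / 2) * (‖u‖₊ ^ (2:ℝ) + ‖v‖₊ ^ (2:ℝ)) ^ (p / 2) := by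
        rw [NNReal.mul_rpow]
    _ ≤ 2 ^ (p / 2) * (2 ^ (p / 2 - 1) * ((‖u‖₊ ^ (2:ℝ)) ^ (p/2) + (‖v‖₊ ^ (2:ℝ)) ^ (p/2))) := by
        gcongr
        exact NNReal.rpow_add_le_mul_rpow_add_rpow _ _ hr1
    _ = 2 ^ (p - 1) * (‖u‖₊ ^ p + ‖v‖₊ ^ p) := by
        rw [← NNReal.rpow_mul, ← NNReal.rpow_mul, ← mul_assoc, ← NNReal.rpow_add two_ne_zero]
        norm_num
        ring_nf

lemma ennreal_clarkson {p : ℝ} (hp : 2 ≤ p) (u v : ℝ) :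
    (‖u + v‖₊ : ℝ≥0∞) ^ p + (‖u - v‖₊ : ℝ≥0∞) ^ p
      ≤ 2 ^ (p - 1) * ((‖u‖₊ : ℝ≥0∞) ^ p + (‖v‖₊ : ℝ≥0∞) ^ p) := by
  have hp0 : (0:ℝ) ≤ p := by linarith
  have hp1 : (0:ℝ) ≤ p - 1 := by linarith
  have h := nn_clarkson hp u v
  have : ((‖u + v‖₊ ^ p + ‖u - v‖₊ ^ p : ℝ≥0) : ℝ≥0∞)
      ≤ ((2 ^ (p - 1) * (‖u‖₊ ^ p + ‖v‖₊ ^ p) : ℝ≥0) : ℝ≥0∞) := ENNReal.coe_le_coe.mpr h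
  simpa [ENNReal.coe_rpow_of_nonneg _ hp0, ENNReal.coe_rpow_of_nonneg _ hp1,
    ENNReal.coe_mul, ENNReal.coe_add] using this

variable {Z : Type*} [MeasurableSpace Z] (μ : Measure Z)

lemma lintegral_clarkson {p : ℝ} (hp : 2 ≤ p) (x y : Z → ℝ)
    (hx : AEMeasurable x μ) (hy : AEMeasurable y μ) :
    (∫⁻ z, (‖x z + y z‖₊ : ℝ≥0∞) ^ p ∂μ) + (∫⁻ z, (‖x z - y z‖₊ : ℝ≥0∞) ^ p ∂μ)
      ≤ 2 ^ (p - 1) * ((∫⁻ z, (‖x z‖₊ : ℝ≥0∞) ^ p ∂μ) + (∫⁻ z, (‖y z‖₊ : ℝ≥0∞) ^ p ∂μ)) := by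
  have hmx : AEMeasurable (fun z => (‖x z‖₊ : ℝ≥0∞) ^ p) μ :=
    (hx.nnnorm.coe_nnreal_ennreal).pow_const p
  have hmy : AEMeasurable (fun z => (‖y z‖₊ : ℝ≥0∞) ^ p) μ :=
    (hy.nnnorm.coe_nnreal_ennreal).pow_const p
  have hma : AEMeasurable (fun z => (‖x z + y z‖₊ : ℝ≥0∞) ^ p) μ :=
    (((hx.add hy).nnnorm).coe_nnreal_ennreal).pow_const p
  rw [← lintegral_add_left' hma, ← lintegral_add_left' hmx,
    ← lintegral_const_mul'' _ (f := fun z => (‖x z‖₊ : ℝ≥0∞) ^ p + (‖y z‖₊ : ℝ≥0∞) ^ p) (hmx.add hmy)]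
  exact lintegral_mono_ae (Filter.Eventually.of_forall fun z => ennreal_clarkson hp (x z) (y z))


lemma LpNorm_rpow_eq (f : Z → ℝ) {p : ℝ} (hp : 0 < p) :
    LpNorm μ f p ^ p = (∫⁻ z, (‖f z‖₊ : ℝ≥0∞) ^ p ∂μ).toReal := by
  rw [LpNorm, eLpNorm_eq_lintegral_rpow_enorm_toReal (ENNReal.ofReal_pos.mpr hp).ne' ENNReal.ofReal_ne_top,
    ENNReal.toReal_ofReal hp.le, ENNReal.toReal_rpow, ← ENNReal.rpow_mul, one_div,
    inv_mul_cancel₀ hp.ne', ENNReal.rpow_one]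
  rfl

lemma lintegral_ne_top (f : Z → ℝ) {p : ℝ} (hp : 0 < p) (hf : MemLp f (ENNReal.ofReal p) μ) :
    (∫⁻ z, (‖f z‖₊ : ℝ≥0∞) ^ p ∂μ) ≠ ⊤ := by
  have := lintegral_rpow_enorm_lt_top_of_eLpNorm_lt_top
    (p := ENNReal.ofReal p) (ENNReal.ofReal_pos.mpr hp).ne' ENNReal.ofReal_ne_top hf.2
  rw [ENNReal.toReal_ofReal hp.le] at this
  exact this.ne

lemma real_clarkson {p : ℝ} (hp : 2 ≤ p) (x y : Z → ℝ)
    (hxm : MemLp x (ENNReal.ofReal p) μ) (hym : MemLp y (ENNReal.ofReal p) μ) :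
    LpNorm μ (x + y) p ^ p + LpNorm μ (x - y) p ^ p
      ≤ 2 ^ (p - 1) * (LpNorm μ x p ^ p + LpNorm μ y p ^ p) := by
  have hp0 : (0:ℝ) < p := lt_of_lt_of_le two_pos hp
  have hfinx := lintegral_ne_top μ x hp0 hxm
  have hfiny := lintegral_ne_top μ y hp0 hym
  have hfina := lintegral_ne_top μ (x + y) hp0 (hxm.add hym)
  have hfins := lintegral_ne_top μ (x - y) hp0 (hxm.sub hym)
  have hI := lintegral_clarkson μ hp x y hxm.aestronglyMeasurable.aemeasurable
    hym.aestronglyMeasurable.aemeasurable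
  rw [LpNorm_rpow_eq μ _ hp0, LpNorm_rpow_eq μ _ hp0, LpNorm_rpow_eq μ _ hp0,
    LpNorm_rpow_eq μ _ hp0]
  have hx' : (∫⁻ z, (‖(x + y) z‖₊ : ℝ≥0∞) ^ p ∂μ) = ∫⁻ z, (‖x z + y z‖₊ : ℝ≥0∞) ^ p ∂μ := rfl
  have hs' : (∫⁻ z, (‖(x - y) z‖₊ : ℝ≥0∞) ^ p ∂μ) = ∫⁻ z, (‖x z - y z‖₊ : ℝ≥0∞) ^ p ∂μ := rfl
  rw [hx', hs', ← ENNReal.toReal_add (by rwa [← hx']) (by rwa [← hs'])]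
  have hmono := ENNReal.toReal_mono
    (ENNReal.mul_ne_top (by simp) (ENNReal.add_ne_top.mpr ⟨hfinx, hfiny⟩)) hI
  rwa [ENNReal.toReal_mul, ENNReal.toReal_add hfinx hfiny, ← ENNReal.toReal_rpow,
    ENNReal.toReal_ofNat] at hmono

lemma real_modulus {p ψ A D : ℝ} (hp : 2 ≤ p) (hψ : 0 < ψ) (hA : 0 ≤ A) (hD : 0 ≤ D)
    (h : A ^ p + D ^ p ≤ 2 ^ p * ψ ^ p) :
    A / ψ ≤ 2 - D ^ p / (p * 2 ^ p * ψ ^ p) := by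
  have hp0 : (0:ℝ) < p := lt_of_lt_of_le two_pos hp
  have hp1 : (1:ℝ) ≤ p := by linarith
  have hc : (0:ℝ) < 2 ^ p * ψ ^ p := by positivity
  set t : ℝ := D ^ p / (2 ^ p * ψ ^ p) with ht
  have hDp : (0:ℝ) ≤ D ^ p := Real.rpow_nonneg hD p
  have hAp : (0:ℝ) ≤ A ^ p := Real.rpow_nonneg hA p
  have ht0 : 0 ≤ t := div_nonneg hDp hc.le
  have ht1 : t ≤ 1 := by
    rw [ht, div_le_one hc]; linarith
  have htp : t / p ≤ 1 := by
    rw [div_le_one hp0]; linarith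
  have hbern : 1 - t ≤ (1 - t / p) ^ p := by
    have := one_add_mul_self_le_rpow_one_add (s := -(t / p)) (by linarith) hp1
    have hpt : p * (t / p) = t := by field_simp
    calc 1 - t = 1 + p * (-(t / p)) := by rw [mul_neg, hpt]; ring
      _ ≤ (1 + -(t / p)) ^ p := this
      _ = (1 - t / p) ^ p := by ring_nf
  have hDt : D ^ p = t * (2 ^ p * ψ ^ p) := by
    rw [ht, div_mul_cancel₀ _ hc.ne']
  have hbase : 0 ≤ 2 * ψ * (1 - t / p) := by
    have : 0 ≤ 1 - t / p := by linarith
    positivity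
  have hAle : A ≤ 2 * ψ * (1 - t / p) := by
    rw [← Real.rpow_le_rpow_iff hA hbase hp0]
    calc A ^ p ≤ 2 ^ p * ψ ^ p * (1 - t) := by
          rw [hDt] at h; nlinarith
      _ ≤ 2 ^ p * ψ ^ p * (1 - t / p) ^ p := by
          have h1 : (0:ℝ) ≤ (1 - t / p) ^ p := Real.rpow_nonneg (by linarith) p
          nlinarith
      _ = (2 * ψ * (1 - t / p)) ^ p := by
          rw [Real.mul_rpow (by positivity) (by linarith), Real.mul_rpow (by norm_num) hψ.le]
  have htpeq : D ^ p / (p * 2 ^ p * ψ ^ p) = t / p := by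
    rw [ht, div_div]; ring_nf
  rw [htpeq, div_le_iff₀ hψ]
  have : t / p ≥ 0 := by positivity
  nlinarith


end Aux

/-- Grand Lebesgue norm `‖f‖_{Gψ[a,b]} = sup_{p ∈ (a,b)} ‖f‖_p / ψ(p)`. -/
noncomputable def GrandNorm {Z : Type*} [MeasurableSpace Z] (μ : Measure Z)
    (a b : ℝ) (ψ : ℝ → ℝ) (f : Z → ℝ) : ℝ :=
  sSup ((fun p => LpNorm μ f p / ψ p) '' (Ioo a b))

/-- The auxiliary functional `θ[Gψ[a,b]](u) = inf_{p ∈ (a,b)} ‖u‖_p^p/(p·2^p·ψ(p)^p)`. -/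
noncomputable def theta {Z : Type*} [MeasurableSpace Z] (μ : Measure Z)
    (a b : ℝ) (ψ : ℝ → ℝ) (u : Z → ℝ) : ℝ :=
  sInf ((fun p => LpNorm μ u p ^ p / (p * 2 ^ p * ψ p ^ p)) '' (Ioo a b))

/-- Theorem 3.1: for `2 < a < b < ∞` and `x, y` in the unit ball of `Gψ[a,b]`,
`‖x + y‖_{Gψ} ≤ 2 - θ(x - y)`. -/
theorem grand_lebesgue_wcoc_large {Z : Type*} [MeasurableSpace Z] (μ : Measure Z)
    (a b : ℝ) (ha : 2 < a) (hab : a < b)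
    (ψ : ℝ → ℝ) (hψpos : ∀ p ∈ Ioo a b, 0 < ψ p)
    (x y : Z → ℝ)
    (hxm : ∀ p ∈ Ioo a b, MemLp x (ENNReal.ofReal p) μ)
    (hym : ∀ p ∈ Ioo a b, MemLp y (ENNReal.ofReal p) μ)
    (hx : ∀ p ∈ Ioo a b, LpNorm μ x p ≤ ψ p)
    (hy : ∀ p ∈ Ioo a b, LpNorm μ y p ≤ ψ p) :
    GrandNorm μ a b ψ (x + y) ≤ 2 - theta μ a b ψ (x - y) := by
  set g : ℝ → ℝ := fun p => LpNorm μ (x - y) p ^ p / (p * 2 ^ p * ψ p ^ p) with hg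
  have hgnonneg : ∀ p, p ∈ Ioo a b → 0 ≤ g p := by
    intro p hp
    have hp0 : (0:ℝ) < p := by have := hp.1; linarith
    have hψ := hψpos p hp
    apply div_nonneg (Real.rpow_nonneg ENNReal.toReal_nonneg p)
    positivity
  -- the key pointwise-in-p estimate
  have key : ∀ p ∈ Ioo a b, LpNorm μ (x + y) p / ψ p ≤ 2 - g p := by
    intro p hp
    have hp2 : (2:ℝ) ≤ p := by have := hp.1; linarith
    have hp0 : (0:ℝ) < p := by linarith
    have hψ := hψpos p hp
    have hC := real_clarkson μ hp2 x y (hxm p hp) (hym p hp)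
    have hxp : LpNorm μ x p ^ p ≤ ψ p ^ p :=
      Real.rpow_le_rpow ENNReal.toReal_nonneg (hx p hp) hp0.le
    have hyp : LpNorm μ y p ^ p ≤ ψ p ^ p :=
      Real.rpow_le_rpow ENNReal.toReal_nonneg (hy p hp) hp0.le
    have h2p : (2:ℝ) ^ (p - 1) * 2 = 2 ^ p := by
      rw [← Real.rpow_add_one (by norm_num : (2:ℝ) ≠ 0) (p - 1)]; ring_nf
    have h2pos : (0:ℝ) < (2:ℝ) ^ (p - 1) := Real.rpow_pos_of_pos two_pos _
    have hbound : LpNorm μ (x + y) p ^ p + LpNorm μ (x - y) p ^ p ≤ 2 ^ p * ψ p ^ p := by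
      calc LpNorm μ (x + y) p ^ p + LpNorm μ (x - y) p ^ p
          ≤ 2 ^ (p - 1) * (LpNorm μ x p ^ p + LpNorm μ y p ^ p) := hC
        _ ≤ 2 ^ (p - 1) * (ψ p ^ p + ψ p ^ p) := by nlinarith
        _ = 2 ^ p * ψ p ^ p := by rw [← h2p]; ring
    exact real_modulus hp2 hψ ENNReal.toReal_nonneg ENNReal.toReal_nonneg hbound
  have bdd : BddBelow (Set.range fun p => ⨅ (_ : p ∈ Ioo a b), g p) := by
    refine ⟨0, ?_⟩
    rintro _ ⟨p, rfl⟩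
    exact Real.iInf_nonneg fun hp => hgnonneg p hp
  have htheta_le : ∀ p ∈ Ioo a b, theta μ a b ψ (x - y) ≤ g p := by
    intro p hp
    calc theta μ a b ψ (x - y) ≤ ⨅ (_ : p ∈ Ioo a b), g p := by rw [ciInf_pos hp]; exact csInf_le ⟨0, by rintro _ ⟨q, hq, rfl⟩; exact hgnonneg q hq⟩ ⟨p, hp, rfl⟩
      _ = g p := ciInf_pos hp
  have hmid : (a + b) / 2 ∈ Ioo a b := ⟨by linarith, by linarith⟩
  have h2theta : 0 ≤ 2 - theta μ a b ψ (x - y) := by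
    have h1 := key _ hmid
    have h2 := htheta_le _ hmid
    have h3 : 0 ≤ LpNorm μ (x + y) ((a + b) / 2) / ψ ((a + b) / 2) :=
      div_nonneg ENNReal.toReal_nonneg (hψpos _ hmid).le
    linarith
  refine csSup_le ⟨_, (a + b) / 2, hmid, rfl⟩ ?_
  rintro _ ⟨p, hp, rfl⟩
  show LpNorm μ (x + y) p / ψ p ≤ _
  have := htheta_le p hp
  have := key p hp
  linarith
end

section
/- (Example 1) Let μ be a probability measure (μ(Z) = 1), 1 < a < b ≤ 2, and suppose ψ(p) ≤ d for all p ∈ (a,b) with some constant d > 0. Then for all x, y in the unit ball of Gψ[a,b], ‖x + y‖_{Gψ} ≤ 2 - ((a-1)/4)·‖x - y‖_a²/d². -/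
open MeasureTheory Set

open Real ENNReal

lemma F_convex {p : ℝ} (hp1 : 1 ≤ p) (hp2 : p ≤ 2) :
    ConvexOn ℝ (Icc (-1:ℝ) 1)
      (fun t => (1+t) ^ p + (1-t) ^ p - p*(p-1)*t^2) := by
  have hInt : interior (Icc (-1:ℝ) 1) = Ioo (-1:ℝ) 1 := interior_Icc
  apply convexOn_of_hasDerivWithinAt2_nonneg (convex_Icc _ _)
    (f' := fun t => p*(1+t)^(p-1) - p*(1-t)^(p-1) - p*(p-1)*(2*t))
    (f'' := fun t => p*(p-1)*(1+t)^(p-2) + p*(p-1)*(1-t)^(p-2) - p*(p-1)*2)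
  · have h1 : Continuous fun t : ℝ => (1+t) ^ p :=
      (continuous_const.add continuous_id).rpow_const (fun t => Or.inr (by positivity))
    have h2 : Continuous fun t : ℝ => (1-t) ^ p :=
      (continuous_const.sub continuous_id).rpow_const (fun t => Or.inr (by positivity))
    exact ((h1.add h2).sub (continuous_const.mul (continuous_pow 2))).continuousOn
  · rw [hInt]
    intro t ht
    have h1t : (0:ℝ) < 1 + t := by linarith [ht.1]
    have h2t : (0:ℝ) < 1 - t := by linarith [ht.2]
    have d1 : HasDerivAt (fun t : ℝ => (1+t) ^ p) (p*(1+t)^(p-1)*1) t := by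
      exact (Real.hasDerivAt_rpow_const (Or.inl h1t.ne')).comp t
        ((hasDerivAt_id t).const_add 1)
    have d2 : HasDerivAt (fun t : ℝ => (1-t) ^ p) (p*(1-t)^(p-1)*(-1)) t := by
      exact (Real.hasDerivAt_rpow_const (Or.inl h2t.ne')).comp t
        ((hasDerivAt_id t).const_sub 1)
    have d3 : HasDerivAt (fun t : ℝ => p*(p-1)*t^2) (p*(p-1)*(2*t)) t := by
      have := (hasDerivAt_pow 2 t).const_mul (p*(p-1))
      refine this.congr_deriv ?_
      ring
    have := ((d1.add d2).sub d3)
    refine this.hasDerivWithinAt.congr_deriv ?_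
    ring
  · rw [hInt]
    intro t ht
    have h1t : (0:ℝ) < 1 + t := by linarith [ht.1]
    have h2t : (0:ℝ) < 1 - t := by linarith [ht.2]
    have d1 : HasDerivAt (fun t : ℝ => p*(1+t)^(p-1)) (p*((p-1)*(1+t)^(p-1-1)*1)) t := by
      exact (((Real.hasDerivAt_rpow_const (p := p-1) (Or.inl h1t.ne')).comp t
        ((hasDerivAt_id t).const_add 1))).const_mul p
    have d2 : HasDerivAt (fun t : ℝ => p*(1-t)^(p-1)) (p*((p-1)*(1-t)^(p-1-1)*(-1))) t := by
      exact (((Real.hasDerivAt_rpow_const (p := p-1) (Or.inl h2t.ne')).comp t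
        ((hasDerivAt_id t).const_sub 1))).const_mul p
    have d3 : HasDerivAt (fun t : ℝ => p*(p-1)*(2*t)) (p*(p-1)*2) t := by
      have := ((hasDerivAt_id t).const_mul (2:ℝ)).const_mul (p*(p-1))
      exact this.congr_deriv (by ring)
    have := ((d1.sub d2).sub d3)
    refine this.hasDerivWithinAt.congr_deriv ?_
    have e1 : p - 1 - 1 = p - 2 := by ring
    rw [e1]; ring
  · rw [hInt]
    intro t ht
    have h1t : (0:ℝ) < 1 + t := by linarith [ht.1]
    have h2t : (0:ℝ) < 1 - t := by linarith [ht.2]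
    set u := (1+t)^(p-2) with hu
    set v := (1-t)^(p-2) with hv
    have hup : 0 < u := Real.rpow_pos_of_pos h1t _
    have hvp : 0 < v := Real.rpow_pos_of_pos h2t _
    have huv : 1 ≤ u * v := by
      rw [hu, hv, ← Real.mul_rpow h1t.le h2t.le]
      apply Real.one_le_rpow_of_pos_of_le_one_of_nonpos
      · nlinarith
      · nlinarith [sq_nonneg t]
      · linarith
    have hsum : 2 ≤ u + v := by nlinarith [sq_nonneg (u - v)]
    have hp0 : 0 ≤ p * (p-1) := by nlinarith
    nlinarith

lemma key_scalar {p t : ℝ} (hp1 : 1 ≤ p) (hp2 : p ≤ 2) (ht0 : 0 ≤ t) (ht1 : t ≤ 1) :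
    (1 + (p-1)*t^2) ^ (p/2) ≤ ((1+t)^p + (1-t)^p)/2 := by
  have h1 : (1 + (p-1)*t^2) ^ (p/2) ≤ 1 + (p/2)*((p-1)*t^2) := by
    apply rpow_one_add_le_one_add_mul_self (by nlinarith) (by linarith) (by linarith)
  have hF := F_convex hp1 hp2
  have h2 := hF.2 (show (-t) ∈ Icc (-1:ℝ) 1 by constructor <;> linarith)
    (show t ∈ Icc (-1:ℝ) 1 by constructor <;> linarith)
    (by norm_num : (0:ℝ) ≤ 1/2) (by norm_num : (0:ℝ) ≤ 1/2) (by norm_num)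
  have h2' : ((1:ℝ)/2) * ((1 + -t)^p + (1 - -t)^p - p*(p-1)*(-t)^2)
      + ((1:ℝ)/2) * ((1 + t)^p + (1 - t)^p - p*(p-1)*t^2)
      ≥ (1 + ((1:ℝ)/2 * (-t) + (1:ℝ)/2 * t))^p + (1 - ((1:ℝ)/2 * (-t) + (1:ℝ)/2 * t))^p
        - p*(p-1)*((1:ℝ)/2 * (-t) + (1:ℝ)/2 * t)^2 := h2
  have h3 : 2 + p*(p-1)*t^2 ≤ (1+t)^p + (1-t)^p := by
    have e3 : (1:ℝ) + -t = 1 - t := by ring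
    have e4 : (1:ℝ) - -t = 1 + t := by ring
    have e0 : (1:ℝ)/2 * (-t) + (1:ℝ)/2 * t = 0 := by ring
    rw [e3, e4, e0] at h2'
    norm_num at h2'
    nlinarith [h2']
  nlinarith

lemma bcl_aux {p : ℝ} (hp1 : 1 ≤ p) (hp2 : p ≤ 2) {α β : ℝ} (hβ0 : 0 ≤ β) (hβα : β ≤ α) :
    (α^2 + (p-1)*β^2) ^ (p/2) ≤ ((α+β)^p + (α-β)^p)/2 := by
  have hα0 : 0 ≤ α := le_trans hβ0 hβα
  rcases eq_or_lt_of_le hα0 with h | hα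
  · have hβ : β = 0 := le_antisymm (h ▸ hβα) hβ0
    rw [← h, hβ]
    norm_num
    rw [Real.zero_rpow (ne_of_gt (by linarith : (0:ℝ) < p/2)),
        Real.zero_rpow (ne_of_gt (by linarith : (0:ℝ) < p))]
  · set t := β / α with htd
    have ht0 : 0 ≤ t := div_nonneg hβ0 hα.le
    have ht1 : t ≤ 1 := (div_le_one hα).mpr hβα
    have hβt : β = α * t := by rw [htd]; field_simp
    have e1 : α^2 + (p-1)*β^2 = α^2 * (1 + (p-1)*t^2) := by rw [hβt]; ring
    have e2 : α + β = α * (1+t) := by rw [hβt]; ring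
    have e3 : α - β = α * (1-t) := by rw [hβt]; ring
    rw [e1, e2, e3]
    rw [Real.mul_rpow (by positivity) (by nlinarith),
        Real.mul_rpow hα.le (by linarith), Real.mul_rpow hα.le (by linarith)]
    have eα : (α^2 : ℝ) ^ (p/2) = α ^ p := by
      rw [← Real.rpow_natCast α 2, ← Real.rpow_mul hα.le]
      congr 1
      push_cast
      ring
    rw [eα]
    have hk := key_scalar hp1 hp2 ht0 ht1
    have hαp : 0 ≤ α ^ p := Real.rpow_nonneg hα.le _
    calc α ^ p * (1 + (p-1)*t^2) ^ (p/2) ≤ α ^ p * (((1+t)^p + (1-t)^p)/2) :=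
          mul_le_mul_of_nonneg_left hk hαp
      _ = (α ^ p * (1+t)^p + α ^ p * (1-t)^p)/2 := by ring

lemma bcl {p : ℝ} (hp1 : 1 ≤ p) (hp2 : p ≤ 2) (α β : ℝ) :
    (α^2 + (p-1)*β^2) ^ (p/2) ≤ (|α+β|^p + |α-β|^p)/2 := by
  set A := |α| with hA
  set B := |β| with hB
  have hA0 : 0 ≤ A := abs_nonneg _
  have hB0 : 0 ≤ B := abs_nonneg _
  have hsum : |α+β|^p + |α-β|^p = (A+B)^p + |A-B|^p := by
    rcases le_total 0 α with hα | hα <;> rcases le_total 0 β with hβ | hβ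
    · rw [hA, hB, abs_of_nonneg hα, abs_of_nonneg hβ, abs_of_nonneg (by linarith)]
    · have e1 : A + B = α - β := by rw [hA, hB, abs_of_nonneg hα, abs_of_nonpos hβ]; ring
      have e2 : |A - B| = |α + β| := by
        rw [hA, hB, abs_of_nonneg hα, abs_of_nonpos hβ]; congr 1; ring
      rw [e1, e2, abs_of_nonneg (by linarith : (0:ℝ) ≤ α - β), add_comm]
    · have e1 : A + B = β - α := by rw [hA, hB, abs_of_nonpos hα, abs_of_nonneg hβ]; ring
      have e2 : |A - B| = |α + β| := by
        rw [hA, hB, abs_of_nonpos hα, abs_of_nonneg hβ]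
        rw [← abs_neg (α+β)]; congr 1; ring
      have e3 : |α - β| = β - α := by rw [← abs_neg (α-β)]; rw [abs_of_nonneg (by linarith)]; ring_nf
      rw [e2, e3, e1, add_comm]
    · have e1 : A + B = -(α + β) := by rw [hA, hB, abs_of_nonpos hα, abs_of_nonpos hβ]; ring
      have e2 : |A - B| = |α - β| := by
        rw [hA, hB, abs_of_nonpos hα, abs_of_nonpos hβ]
        rw [← abs_neg (α-β)]; congr 1; ring
      rw [e1, e2, abs_of_nonpos (by linarith : α + β ≤ 0)]
  rw [hsum]
  have hα2 : α^2 = A^2 := (sq_abs α).symm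
  have hβ2 : β^2 = B^2 := (sq_abs β).symm
  rw [hα2, hβ2]
  rcases le_total B A with hBA | hAB
  · have := bcl_aux hp1 hp2 hB0 hBA
    rwa [abs_of_nonneg (by linarith : (0:ℝ) ≤ A - B)]
  · have h1 : (A^2 + (p-1)*B^2) ^ (p/2) ≤ (B^2 + (p-1)*A^2) ^ (p/2) := by
      apply Real.rpow_le_rpow (by nlinarith) (by nlinarith [mul_nonneg (sub_nonneg.mpr hAB) (by linarith : (0:ℝ) ≤ A + B)]) (by linarith)
    have h2 := bcl_aux hp1 hp2 hA0 hAB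
    have e1 : |A - B| = B - A := by
      rw [← abs_neg (A-B), abs_of_nonneg (by linarith)]; ring_nf
    rw [e1]
    calc (A^2 + (p-1)*B^2) ^ (p/2) ≤ (B^2 + (p-1)*A^2) ^ (p/2) := h1
      _ ≤ ((B+A)^p + (B-A)^p)/2 := h2
      _ = ((A+B)^p + (B-A)^p)/2 := by rw [add_comm B A]

lemma bcl2 {p : ℝ} (hp1 : 1 ≤ p) (hp2 : p ≤ 2) (s t : ℝ) :
    ((s+t)^2 + (p-1)*(s-t)^2) ^ (p/2) ≤ 2^(p-1) * (|s|^p + |t|^p) := by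
  have h := bcl hp1 hp2 ((s+t)/2) ((s-t)/2)
  have e1 : (s+t)/2 + (s-t)/2 = s := by ring
  have e2 : (s+t)/2 - (s-t)/2 = t := by ring
  rw [e1, e2] at h
  have e3 : ((s+t)/2)^2 + (p-1)*((s-t)/2)^2 = ((s+t)^2 + (p-1)*(s-t)^2)/4 := by ring
  rw [e3] at h
  have hnum : (0:ℝ) ≤ (s+t)^2 + (p-1)*(s-t)^2 := by nlinarith [sq_nonneg (s+t), sq_nonneg (s-t)]
  rw [Real.div_rpow hnum (by norm_num : (0:ℝ) ≤ 4)] at h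
  have e4 : (4:ℝ)^(p/2) = 2^p := by
    rw [show (4:ℝ) = 2^(2:ℝ) by norm_num [Real.rpow_natCast], ← Real.rpow_mul (by norm_num)]
    congr 1; ring
  rw [e4] at h
  have h2p : (0:ℝ) < 2^p := Real.rpow_pos_of_pos two_pos _
  rw [div_le_div_iff₀ h2p (by norm_num)] at h
  · have e5 : (2:ℝ)^(p-1) = 2^p/2 := by
      rw [Real.rpow_sub two_pos, Real.rpow_one]
    rw [e5]
    calc ((s+t)^2 + (p-1)*(s-t)^2) ^ (p/2)
        ≤ (|s|^p + |t|^p) * 2^p / 2 := by linarith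
      _ = 2^p/2 * (|s|^p + |t|^p) := by ring

lemma young_wt {r u v w₁ w₂ : ℝ} (hr0 : 0 < r) (hr1 : r ≤ 1)
    (hu : 0 ≤ u) (hv : 0 ≤ v) (hw₁ : 0 ≤ w₁) (hw₂ : 0 ≤ w₂) (hw : w₁ + w₂ = 1) :
    w₁^(1-r) * u^r + w₂^(1-r) * v^r ≤ (u+v)^r := by
  rcases eq_or_lt_of_le (by positivity : (0:ℝ) ≤ u + v) with h | h
  · have hu0 : u = 0 := by linarith [hv]
    have hv0 : v = 0 := by linarith [hu]
    rw [hu0, hv0, Real.zero_rpow hr0.ne']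
    norm_num
    positivity
  · set s := u/(u+v) with hs
    have hs0 : 0 ≤ s := by positivity
    have hs1 : s ≤ 1 := by rw [hs, div_le_one h]; linarith
    have hus : (u+v) * s = u := by rw [hs]; field_simp
    have hvs : (u+v) * (1-s) = v := by rw [hs]; field_simp; ring
    have hur : u^r = (u+v)^r * s^r := by
      conv_lhs => rw [← hus]
      rw [Real.mul_rpow h.le hs0]
    have hvr : v^r = (u+v)^r * (1-s)^r := by
      conv_lhs => rw [← hvs]
      rw [Real.mul_rpow h.le (by linarith)]
    have y1 : s^r * w₁^(1-r) ≤ r*s + (1-r)*w₁ :=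
      Real.geom_mean_le_arith_mean2_weighted hr0.le (by linarith) hs0 hw₁ (by ring)
    have y2 : (1-s)^r * w₂^(1-r) ≤ r*(1-s) + (1-r)*w₂ :=
      Real.geom_mean_le_arith_mean2_weighted hr0.le (by linarith) (by linarith) hw₂ (by ring)
    have hpw : (0:ℝ) ≤ (u+v)^r := Real.rpow_nonneg h.le _
    calc w₁^(1-r) * u^r + w₂^(1-r) * v^r
        = (u+v)^r * (s^r * w₁^(1-r) + (1-s)^r * w₂^(1-r)) := by rw [hur, hvr]; ring
      _ ≤ (u+v)^r * ((r*s + (1-r)*w₁) + (r*(1-s) + (1-r)*w₂)) := by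
          apply mul_le_mul_of_nonneg_left (by linarith) hpw
      _ = (u+v)^r * (r + (1-r)*(w₁+w₂)) := by ring
      _ = (u+v)^r := by rw [hw]; ring_nf

lemma young_wt_ennreal {r : ℝ} (hr0 : 0 < r) (hr1 : r ≤ 1)
    (u v w₁ w₂ : ℝ≥0∞) (hw : w₁ + w₂ = 1) :
    w₁^(1-r) * u^r + w₂^(1-r) * v^r ≤ (u+v)^r := by
  have hw₁ : w₁ ≤ 1 := hw ▸ le_add_right (le_refl w₁)
  have hw₂ : w₂ ≤ 1 := hw ▸ le_add_left (le_refl w₂)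
  have hw₁t : w₁ ≠ ⊤ := (hw₁.trans_lt ENNReal.one_lt_top).ne
  have hw₂t : w₂ ≠ ⊤ := (hw₂.trans_lt ENNReal.one_lt_top).ne
  rcases eq_or_ne u ⊤ with hu | hu
  · rw [hu]
    have : (⊤ + v : ℝ≥0∞) = ⊤ := by simp
    rw [this, ENNReal.top_rpow_of_pos hr0]
    exact le_top
  rcases eq_or_ne v ⊤ with hv | hv
  · rw [hv]
    have : (u + ⊤ : ℝ≥0∞) = ⊤ := by simp
    rw [this, ENNReal.top_rpow_of_pos hr0]
    exact le_top
  have huv : u + v ≠ ⊤ := by finiteness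
  have h1 : w₁^(1-r) ≠ ⊤ := ENNReal.rpow_ne_top_of_nonneg (by linarith) hw₁t
  have h2 : w₂^(1-r) ≠ ⊤ := ENNReal.rpow_ne_top_of_nonneg (by linarith) hw₂t
  have h3 : u^r ≠ ⊤ := ENNReal.rpow_ne_top_of_nonneg hr0.le hu
  have h4 : v^r ≠ ⊤ := ENNReal.rpow_ne_top_of_nonneg hr0.le hv
  have hLfin : w₁^(1-r) * u^r + w₂^(1-r) * v^r ≠ ⊤ := by
    exact ENNReal.add_ne_top.mpr ⟨ENNReal.mul_ne_top h1 h3, ENNReal.mul_ne_top h2 h4⟩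
  have hRfin : (u+v)^r ≠ ⊤ := ENNReal.rpow_ne_top_of_nonneg hr0.le huv
  rw [← ENNReal.toReal_le_toReal hLfin hRfin]
  rw [ENNReal.toReal_add (ENNReal.mul_ne_top h1 h3) (ENNReal.mul_ne_top h2 h4), ENNReal.toReal_mul,
    ENNReal.toReal_mul, ← ENNReal.toReal_rpow, ← ENNReal.toReal_rpow, ← ENNReal.toReal_rpow,
    ← ENNReal.toReal_rpow, ← ENNReal.toReal_rpow, ENNReal.toReal_add hu hv]
  apply young_wt hr0 hr1 ENNReal.toReal_nonneg ENNReal.toReal_nonneg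
    ENNReal.toReal_nonneg ENNReal.toReal_nonneg
  rw [← ENNReal.toReal_add hw₁t hw₂t, hw, ENNReal.toReal_one]

open MeasureTheory in
lemma rev_minkowski {Z : Type*} [MeasurableSpace Z] (μ : Measure Z) {r : ℝ}
    (hr0 : 0 < r) (hr1 : r ≤ 1) {f g : Z → ℝ≥0∞}
    (hf : AEMeasurable f μ) (hg : AEMeasurable g μ) :
    (∫⁻ z, (f z)^r ∂μ)^(1/r) + (∫⁻ z, (g z)^r ∂μ)^(1/r)
      ≤ (∫⁻ z, (f z + g z)^r ∂μ)^(1/r) := by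
  set A := (∫⁻ z, (f z)^r ∂μ)^(1/r) with hA
  set B := (∫⁻ z, (g z)^r ∂μ)^(1/r) with hB
  have hmonoA : A ≤ (∫⁻ z, (f z + g z)^r ∂μ)^(1/r) := by
    rw [hA]
    apply ENNReal.rpow_le_rpow _ (by positivity)
    exact lintegral_mono fun z => ENNReal.rpow_le_rpow (le_self_add) hr0.le
  have hmonoB : B ≤ (∫⁻ z, (f z + g z)^r ∂μ)^(1/r) := by
    rw [hB]
    apply ENNReal.rpow_le_rpow _ (by positivity)
    exact lintegral_mono fun z => ENNReal.rpow_le_rpow (le_add_self) hr0.le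
  rcases eq_or_ne A 0 with hA0 | hA0
  · rw [hA0, zero_add]; exact hmonoB
  rcases eq_or_ne B 0 with hB0 | hB0
  · rw [hB0, add_zero]; exact hmonoA
  rcases eq_or_ne A ⊤ with hAt | hAt
  · exact le_trans (by simp [hAt]) (hAt ▸ hmonoA)
  rcases eq_or_ne B ⊤ with hBt | hBt
  · exact le_trans (by simp [hBt]) (hBt ▸ hmonoB)
  have hABne : A + B ≠ 0 := by simp [hA0, hB0]
  have hABt : A + B ≠ ⊤ := by finiteness
  set w₁ := A/(A+B) with hw₁
  set w₂ := B/(A+B) with hw₂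
  have hwsum : w₁ + w₂ = 1 := by
    rw [hw₁, hw₂, ENNReal.div_add_div_same, ENNReal.div_self hABne hABt]
  have hpt : ∀ z, w₁^(1-r) * (f z)^r + w₂^(1-r) * (g z)^r ≤ (f z + g z)^r :=
    fun z => young_wt_ennreal hr0 hr1 (f z) (g z) w₁ w₂ hwsum
  have hint : w₁^(1-r) * ∫⁻ z, (f z)^r ∂μ + w₂^(1-r) * ∫⁻ z, (g z)^r ∂μ
      ≤ ∫⁻ z, (f z + g z)^r ∂μ := by
    have hfm : AEMeasurable (fun z => (f z)^r) μ := hf.pow_const r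
    have hgm : AEMeasurable (fun z => (g z)^r) μ := hg.pow_const r
    rw [← lintegral_const_mul' _ _ (ENNReal.rpow_ne_top_of_nonneg (by linarith)
        ((ENNReal.div_lt_top hAt hABne).ne)),
      ← lintegral_const_mul' _ _ (ENNReal.rpow_ne_top_of_nonneg (by linarith)
        ((ENNReal.div_lt_top hBt hABne).ne)),
      ← lintegral_add_left' (hfm.const_mul _)]
    exact lintegral_mono hpt
  have hArp : ∫⁻ z, (f z)^r ∂μ = A^r := by
    rw [hA, ← ENNReal.rpow_mul, one_div, inv_mul_cancel₀ hr0.ne', ENNReal.rpow_one]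
  have hBrp : ∫⁻ z, (g z)^r ∂μ = B^r := by
    rw [hB, ← ENNReal.rpow_mul, one_div, inv_mul_cancel₀ hr0.ne', ENNReal.rpow_one]
  rw [hArp, hBrp] at hint
  have hcalc : w₁^(1-r) * A^r + w₂^(1-r) * B^r = (A+B)^r := by
    have e1 : w₁^(1-r) * A^r = A / (A+B)^(1-r) := by
      rw [hw₁, ENNReal.div_rpow_of_nonneg _ _ (by linarith), div_eq_mul_inv, div_eq_mul_inv,
        mul_right_comm, ← ENNReal.rpow_add _ _ hA0 hAt,
        show (1-r)+r = 1 by ring, ENNReal.rpow_one]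
    have e2 : w₂^(1-r) * B^r = B / (A+B)^(1-r) := by
      rw [hw₂, ENNReal.div_rpow_of_nonneg _ _ (by linarith), div_eq_mul_inv, div_eq_mul_inv,
        mul_right_comm, ← ENNReal.rpow_add _ _ hB0 hBt,
        show (1-r)+r = 1 by ring, ENNReal.rpow_one]
    have hYne : (A+B)^(1-r) ≠ 0 := by
      simp [ENNReal.rpow_eq_zero_iff, hABne, hABt]
    have hYt : (A+B)^(1-r) ≠ ⊤ := ENNReal.rpow_ne_top_of_nonneg (by linarith) hABt
    rw [e1, e2, ENNReal.div_add_div_same]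
    refine ((ENNReal.eq_div_iff hYne hYt).mpr ?_).symm
    rw [← ENNReal.rpow_add _ _ hABne hABt, show (1-r)+r = 1 by ring, ENNReal.rpow_one]
  rw [hcalc] at hint
  calc A + B = ((A+B)^r)^(1/r) := by
        rw [← ENNReal.rpow_mul, mul_one_div, div_self hr0.ne', ENNReal.rpow_one]
    _ ≤ (∫⁻ z, (f z + g z)^r ∂μ)^(1/r) := ENNReal.rpow_le_rpow hint (by positivity)

lemma rpow_two' (t : ℝ) : t ^ (2:ℝ) = t^2 := by
  rw [show (2:ℝ) = ((2:ℕ):ℝ) by norm_num, Real.rpow_natCast]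

lemma Real.ennnorm_eq_ofReal_abs (r : ℝ) : (‖r‖₊ : ℝ≥0∞) = ENNReal.ofReal |r| := by
  rw [← enorm_eq_nnnorm, Real.enorm_eq_ofReal_abs]

lemma MeasureTheory.AEStronglyMeasurable.ennnorm {Z : Type*} [MeasurableSpace Z] {μ : Measure Z}
    {f : Z → ℝ} (hf : AEStronglyMeasurable f μ) :
    AEMeasurable (fun z => (‖f z‖₊ : ℝ≥0∞)) μ := hf.enorm

open MeasureTheory in
lemma per_p {Z : Type*} [MeasurableSpace Z] (μ : Measure Z) [IsProbabilityMeasure μ]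
    {p ψp : ℝ} (hp1 : 1 < p) (hp2 : p ≤ 2) (hψ : 0 < ψp)
    {x y : Z → ℝ} (hxm : MemLp x (ENNReal.ofReal p) μ) (hym : MemLp y (ENNReal.ofReal p) μ)
    (hx : (eLpNorm x (ENNReal.ofReal p) μ).toReal ≤ ψp)
    (hy : (eLpNorm y (ENNReal.ofReal p) μ).toReal ≤ ψp) :
    (eLpNorm (x + y) (ENNReal.ofReal p) μ).toReal
      ≤ 2*ψp - (p-1) * ((eLpNorm (x - y) (ENNReal.ofReal p) μ).toReal)^2 / (4*ψp) := by
  have hp0 : (0:ℝ) < p := by linarith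
  set pe := ENNReal.ofReal p with hpe
  have hpe0 : pe ≠ 0 := by
    rw [hpe, Ne, ENNReal.ofReal_eq_zero]; push_neg; exact hp0
  have hpet : pe ≠ ⊤ := ENNReal.ofReal_ne_top
  have hptr : pe.toReal = p := ENNReal.toReal_ofReal hp0.le
  have hels : ∀ f : Z → ℝ, eLpNorm f pe μ = (∫⁻ z, (‖f z‖₊ : ℝ≥0∞) ^ p ∂μ) ^ (1/p) := by
    intro f
    simp only [hptr, eLpNorm_eq_lintegral_rpow_enorm_toReal hpe0 hpet, enorm_eq_nnnorm]
  have hxs := hxm.aestronglyMeasurable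
  have hys := hym.aestronglyMeasurable
  have haddsm : AEStronglyMeasurable (fun z => x z + y z) μ := hxs.add hys
  have hsubsm : AEStronglyMeasurable (fun z => x z - y z) μ := hxs.sub hys
  set F : Z → ℝ≥0∞ := fun z => (‖x z + y z‖₊ : ℝ≥0∞) ^ (2:ℝ) with hF
  set G : Z → ℝ≥0∞ := fun z => ENNReal.ofReal (p-1) * (‖x z - y z‖₊ : ℝ≥0∞) ^ (2:ℝ) with hG
  have hFm : AEMeasurable F μ := haddsm.ennnorm.pow_const _
  have hGm : AEMeasurable G μ := (hsubsm.ennnorm.pow_const _).const_mul _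
  have hr0 : (0:ℝ) < p/2 := by linarith
  have hr1 : p/2 ≤ 1 := by linarith
  -- pointwise bound
  have hptw : ∀ z, (F z + G z) ^ (p/2)
      ≤ ENNReal.ofReal (2^(p-1)) * ((‖x z‖₊ : ℝ≥0∞)^p + (‖y z‖₊ : ℝ≥0∞)^p) := by
    intro z
    have hFG : F z + G z = ENNReal.ofReal ((x z + y z)^2 + (p-1)*(x z - y z)^2) := by
      rw [hF, hG]
      simp only []
      rw [Real.ennnorm_eq_ofReal_abs, Real.ennnorm_eq_ofReal_abs,
        ENNReal.ofReal_rpow_of_nonneg (abs_nonneg _) (by norm_num),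
        ENNReal.ofReal_rpow_of_nonneg (abs_nonneg _) (by norm_num),
        rpow_two', rpow_two', sq_abs, sq_abs,
        ← ENNReal.ofReal_mul (by linarith),
        ← ENNReal.ofReal_add (sq_nonneg _) (mul_nonneg (by linarith) (sq_nonneg _))]
    rw [hFG, ENNReal.ofReal_rpow_of_nonneg
      (add_nonneg (sq_nonneg _) (mul_nonneg (by linarith) (sq_nonneg _))) hr0.le]
    calc ENNReal.ofReal (((x z + y z)^2 + (p-1)*(x z - y z)^2) ^ (p/2))
        ≤ ENNReal.ofReal (2^(p-1) * (|x z|^p + |y z|^p)) :=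
          ENNReal.ofReal_le_ofReal (bcl2 hp1.le hp2 (x z) (y z))
      _ = ENNReal.ofReal (2^(p-1)) * ((‖x z‖₊ : ℝ≥0∞)^p + (‖y z‖₊ : ℝ≥0∞)^p) := by
          rw [ENNReal.ofReal_mul (by positivity),
            ENNReal.ofReal_add (by positivity) (by positivity),
            Real.ennnorm_eq_ofReal_abs, Real.ennnorm_eq_ofReal_abs,
            ENNReal.ofReal_rpow_of_nonneg (abs_nonneg _) hp0.le,
            ENNReal.ofReal_rpow_of_nonneg (abs_nonneg _) hp0.le]
  -- integral bounds for x and y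
  have hIbd : ∀ f : Z → ℝ, MemLp f pe μ → (eLpNorm f pe μ).toReal ≤ ψp →
      ∫⁻ z, (‖f z‖₊ : ℝ≥0∞)^p ∂μ ≤ ENNReal.ofReal (ψp^p) := by
    intro f hfm hfb
    have h1 : eLpNorm f pe μ ≤ ENNReal.ofReal ψp :=
      (ENNReal.le_ofReal_iff_toReal_le hfm.2.ne hψ.le).mpr hfb
    have h2 := ENNReal.rpow_le_rpow h1 hp0.le
    rw [hels f, ← ENNReal.rpow_mul, one_div, inv_mul_cancel₀ hp0.ne',
      ENNReal.rpow_one] at h2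
    rw [← ENNReal.ofReal_rpow_of_nonneg hψ.le hp0.le]
    exact h2
  have hint2 : ∫⁻ z, (F z + G z) ^ (p/2) ∂μ ≤ ENNReal.ofReal ((2*ψp)^p) := by
    calc ∫⁻ z, (F z + G z)^(p/2) ∂μ
        ≤ ∫⁻ z, ENNReal.ofReal (2^(p-1)) * ((‖x z‖₊ : ℝ≥0∞)^p + (‖y z‖₊:ℝ≥0∞)^p) ∂μ :=
          lintegral_mono hptw
      _ = ENNReal.ofReal (2^(p-1)) * ∫⁻ z, ((‖x z‖₊:ℝ≥0∞)^p + (‖y z‖₊:ℝ≥0∞)^p) ∂μ :=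
          lintegral_const_mul' _ _ ENNReal.ofReal_ne_top
      _ = ENNReal.ofReal (2^(p-1)) *
            ((∫⁻ z, (‖x z‖₊:ℝ≥0∞)^p ∂μ) + ∫⁻ z, (‖y z‖₊:ℝ≥0∞)^p ∂μ) := by
          rw [lintegral_add_left' (hxs.ennnorm.pow_const _)]
      _ ≤ ENNReal.ofReal (2^(p-1)) * (ENNReal.ofReal (ψp^p) + ENNReal.ofReal (ψp^p)) := by
          exact mul_le_mul_right (add_le_add (hIbd x hxm hx) (hIbd y hym hy)) _
      _ = ENNReal.ofReal ((2*ψp)^p) := by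
          rw [← ENNReal.ofReal_add (by positivity) (by positivity),
            ← ENNReal.ofReal_mul (by positivity)]
          congr 1
          rw [Real.mul_rpow (by norm_num) hψ.le, Real.rpow_sub two_pos, Real.rpow_one]
          ring
  have hrm := rev_minkowski μ hr0 hr1 hFm hGm
  -- identify the three quantities
  have hFr : ∀ z, F z ^ (p/2) = (‖(x+y) z‖₊ : ℝ≥0∞) ^ p := by
    intro z
    rw [hF]
    simp only [Pi.add_apply]
    rw [← ENNReal.rpow_mul, show (2:ℝ)*(p/2) = p by ring]
  have hGr : ∀ z, G z ^ (p/2)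
      = ENNReal.ofReal (p-1) ^ (p/2) * (‖(x-y) z‖₊ : ℝ≥0∞) ^ p := by
    intro z
    rw [hG]
    simp only [Pi.sub_apply]
    rw [ENNReal.mul_rpow_of_nonneg _ _ hr0.le, ← ENNReal.rpow_mul,
      show (2:ℝ)*(p/2) = p by ring]
  have hE1 : (∫⁻ z, F z ^ (p/2) ∂μ) ^ (1/(p/2)) = eLpNorm (x+y) pe μ ^ (2:ℝ) := by
    rw [lintegral_congr hFr, hels (x+y), ← ENNReal.rpow_mul]
    congr 1
    field_simp
  have hE2 : (∫⁻ z, G z ^ (p/2) ∂μ) ^ (1/(p/2))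
      = ENNReal.ofReal (p-1) * eLpNorm (x-y) pe μ ^ (2:ℝ) := by
    rw [lintegral_congr hGr,
      lintegral_const_mul' _ _ (ENNReal.rpow_ne_top_of_nonneg hr0.le ENNReal.ofReal_ne_top),
      ENNReal.mul_rpow_of_nonneg _ _ (by positivity)]
    congr 1
    · rw [← ENNReal.rpow_mul, show (p/2)*(1/(p/2)) = 1 by field_simp, ENNReal.rpow_one]
    · rw [hels (x-y), ← ENNReal.rpow_mul]
      congr 1
      field_simp
  have hkey : eLpNorm (x+y) pe μ ^ (2:ℝ)
      + ENNReal.ofReal (p-1) * eLpNorm (x-y) pe μ ^ (2:ℝ)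
      ≤ ENNReal.ofReal (2*ψp) ^ (2:ℝ) := by
    rw [← hE1, ← hE2]
    refine le_trans hrm ?_
    calc (∫⁻ z, (F z + G z)^(p/2) ∂μ)^(1/(p/2))
        ≤ (ENNReal.ofReal ((2*ψp)^p))^(1/(p/2)) :=
          ENNReal.rpow_le_rpow hint2 (by positivity)
      _ = ENNReal.ofReal (2*ψp) ^ (2:ℝ) := by
          rw [← ENNReal.ofReal_rpow_of_nonneg (by positivity) hp0.le, ← ENNReal.rpow_mul,
            show p*(1/(p/2)) = 2 by field_simp]
  -- pass to reals
  have hE1t : eLpNorm (x+y) pe μ ≠ ⊤ := (hxm.add hym).2.ne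
  have hE2t : eLpNorm (x-y) pe μ ≠ ⊤ := (hxm.sub hym).2.ne
  set n := (eLpNorm (x+y) pe μ).toReal with hn
  set δ := (eLpNorm (x-y) pe μ).toReal with hδ
  have hn0 : 0 ≤ n := ENNReal.toReal_nonneg
  have hδ0 : 0 ≤ δ := ENNReal.toReal_nonneg
  have hreal : n^2 + (p-1)*δ^2 ≤ (2*ψp)^2 := by
    have hfin1 : eLpNorm (x+y) pe μ ^ (2:ℝ) ≠ ⊤ :=
      ENNReal.rpow_ne_top_of_nonneg (by norm_num) hE1t
    have hfin2 : ENNReal.ofReal (p-1) * eLpNorm (x-y) pe μ ^ (2:ℝ) ≠ ⊤ :=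
      ENNReal.mul_ne_top ENNReal.ofReal_ne_top
        (ENNReal.rpow_ne_top_of_nonneg (by norm_num) hE2t)
    have h := ENNReal.toReal_mono
      (ENNReal.rpow_ne_top_of_nonneg (by norm_num) ENNReal.ofReal_ne_top) hkey
    rw [ENNReal.toReal_add hfin1 hfin2, ENNReal.toReal_mul, ← ENNReal.toReal_rpow,
      ← ENNReal.toReal_rpow, ← ENNReal.toReal_rpow,
      ENNReal.toReal_ofReal (by linarith : (0:ℝ) ≤ p-1),
      ENNReal.toReal_ofReal (by positivity : (0:ℝ) ≤ 2*ψp)] at h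
    rw [rpow_two', rpow_two', rpow_two'] at h
    exact h
  have key2 : 4*n*ψp ≤ 8*ψp^2 - (p-1)*δ^2 := by nlinarith [sq_nonneg (n - 2*ψp)]
  have h3 : (p-1)*δ^2/(4*ψp) ≤ 2*ψp - n := by
    rw [div_le_iff₀ (by positivity)]
    nlinarith
  linarith

/-- Example 1: on a probability space, for `1 < a < b ≤ 2` and `ψ ≤ d`, any `x, y`
in the unit ball of `Gψ[a,b]` satisfy
`‖x + y‖_{Gψ} ≤ 2 - ((a-1)/4)·‖x - y‖_a²/d²`. -/
theorem grand_lebesgue_example1 {Z : Type*} [MeasurableSpace Z] (μ : Measure Z)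
    [IsProbabilityMeasure μ]
    (a b : ℝ) (ha : 1 < a) (hab : a < b) (hb : b ≤ 2)
    (ψ : ℝ → ℝ) (hψpos : ∀ p ∈ Ioo a b, 0 < ψ p)
    (d : ℝ) (hd : 0 < d) (hψd : ∀ p ∈ Ioo a b, ψ p ≤ d)
    (x y : Z → ℝ)
    (hxm : ∀ p ∈ Ioo a b, MemLp x (ENNReal.ofReal p) μ)
    (hym : ∀ p ∈ Ioo a b, MemLp y (ENNReal.ofReal p) μ)
    (hx : ∀ p ∈ Ioo a b, LpNorm μ x p ≤ ψ p)
    (hy : ∀ p ∈ Ioo a b, LpNorm μ y p ≤ ψ p) :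
    GrandNorm μ a b ψ (x + y) ≤
      2 - (a - 1) / 4 * (LpNorm μ (x - y) a ^ 2 / d ^ 2) := by
  set δa := LpNorm μ (x - y) a with hδa
  have hδa0 : 0 ≤ δa := ENNReal.toReal_nonneg
  have hδle : ∀ p ∈ Ioo a b, δa ≤ LpNorm μ (x - y) p := by
    intro p hp
    have hsm : AEStronglyMeasurable (x - y) μ :=
      ((hxm p hp).sub (hym p hp)).aestronglyMeasurable
    have h1 : eLpNorm (x-y) (ENNReal.ofReal a) μ ≤ eLpNorm (x-y) (ENNReal.ofReal p) μ :=
      eLpNorm_le_eLpNorm_of_exponent_le (ENNReal.ofReal_le_ofReal hp.1.le) hsm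
    exact ENNReal.toReal_mono ((hxm p hp).sub (hym p hp)).2.ne h1
  have hδp2d : ∀ p ∈ Ioo a b, LpNorm μ (x - y) p ≤ 2*d := by
    intro p hp
    have hone : (1:ℝ≥0∞) ≤ ENNReal.ofReal p := by
      rw [show (1:ℝ≥0∞) = ENNReal.ofReal 1 by simp]
      exact ENNReal.ofReal_le_ofReal (by linarith [hp.1])
    have h1 : eLpNorm (x-y) (ENNReal.ofReal p) μ
        ≤ eLpNorm x (ENNReal.ofReal p) μ + eLpNorm y (ENNReal.ofReal p) μ :=
      eLpNorm_sub_le (hxm p hp).aestronglyMeasurable (hym p hp).aestronglyMeasurable hone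
    calc LpNorm μ (x-y) p
        ≤ (eLpNorm x (ENNReal.ofReal p) μ + eLpNorm y (ENNReal.ofReal p) μ).toReal :=
          ENNReal.toReal_mono
            (ENNReal.add_ne_top.mpr ⟨(hxm p hp).2.ne, (hym p hp).2.ne⟩) h1
      _ ≤ (eLpNorm x (ENNReal.ofReal p) μ).toReal + (eLpNorm y (ENNReal.ofReal p) μ).toReal :=
          ENNReal.toReal_add_le
      _ ≤ ψ p + ψ p := add_le_add (hx p hp) (hy p hp)
      _ ≤ 2*d := by have := hψd p hp; linarith
  have hδa2d : δa ≤ 2*d := by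
    have hmid : (a+b)/2 ∈ Ioo a b := ⟨by linarith, by linarith⟩
    exact (hδle _ hmid).trans (hδp2d _ hmid)
  set R := 2 - (a - 1) / 4 * (δa ^ 2 / d ^ 2) with hR
  have hR0 : 0 ≤ R := by
    rw [hR]
    have h1 : δa^2/d^2 ≤ 4 := by
      rw [div_le_iff₀ (by positivity)]
      nlinarith
    nlinarith
  have hbound : ∀ p, (⨆ (_ : p ∈ Ioo a b), LpNorm μ (x+y) p / ψ p) ≤ R := by
    intro p
    apply Real.iSup_le _ hR0
    intro hp
    have hp1 : 1 < p := lt_trans ha hp.1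
    have hp2 : p ≤ 2 := le_of_lt (lt_of_lt_of_le hp.2 hb)
    have hψp := hψpos p hp
    have hper : LpNorm μ (x+y) p
        ≤ 2*(ψ p) - (p-1) * (LpNorm μ (x-y) p)^2 / (4*(ψ p)) :=
      per_p μ hp1 hp2 hψp (hxm p hp) (hym p hp) (hx p hp) (hy p hp)
    have hδp0 : 0 ≤ LpNorm μ (x-y) p := ENNReal.toReal_nonneg
    have hstep : LpNorm μ (x+y) p / ψ p
        ≤ 2 - (p-1)*(LpNorm μ (x-y) p)^2/(4*(ψ p)^2) := by
      rw [div_le_iff₀ hψp]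
      have e : (2 - (p-1)*(LpNorm μ (x-y) p)^2/(4*(ψ p)^2)) * ψ p
          = 2*(ψ p) - (p-1)*(LpNorm μ (x-y) p)^2/(4*(ψ p)) := by
        field_simp
      rw [e]
      exact hper
    refine hstep.trans ?_
    have hcmp : (a-1)/4 * (δa^2/d^2) ≤ (p-1)*(LpNorm μ (x-y) p)^2/(4*(ψ p)^2) := by
      have e1 : (a-1)/4 * (δa^2/d^2) = ((a-1)*δa^2)/(4*d^2) := by ring
      have e2 : (p-1)*(LpNorm μ (x-y) p)^2/(4*(ψ p)^2)
          = ((p-1)*(LpNorm μ (x-y) p)^2)/(4*(ψ p)^2) := by ring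
      rw [e1, e2]
      apply div_le_div₀ (mul_nonneg (by linarith) (sq_nonneg _)) _ (by positivity) _
      · have h := hδle p hp
        have hap : a < p := hp.1
        nlinarith [mul_nonneg (sub_nonneg.mpr h) (by linarith : (0:ℝ) ≤ LpNorm μ (x - y) p + δa),
          mul_nonneg (by linarith : (0:ℝ) ≤ p - a) (sq_nonneg (LpNorm μ (x - y) p))]
      · have := hψd p hp
        nlinarith
    rw [hR]
    linarith
  unfold GrandNorm
  apply Real.sSup_le _ hR0
  rintro _ ⟨p, hp, rfl⟩
  have := hbound p
  rwa [ciSup_pos hp] at this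
end
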